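/- arXiv:2207.00389 — 4 statements merged into one kernel-verified Lean document; each statement's English description precedes it below -/
import Mathlib

section
/- Let g = f/K satisfy ∇g(x,s)·x ≥ c|x|² for all |x| > R̄ and s ∈ S, with c > 0. Let ρ_ε be a probability density on B_R × S (R > R̄) satisfying ∫∫ (∇g · x) ρ_ε dx dμ(s) + ε ∫∫ ∇ρ_ε · x dx dμ(s) = 0 together with the integration-by-parts identity ∫∫ ∇ρ_ε · x dx dμ(s) ≥ −d. Then the second moment satisfies m₂(ρ_ε) := ∫∫ |x|² ρ_ε dx dμ(s) ≤ (R̄ G_{R̄} + c R̄² + d)/c, where G_{R̄} := sup_{(x,s)∈B_{R̄}×S} |∇g(x,s)|; in particular the bound is independent of R and ε. -/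
open MeasureTheory RealInnerProductSpace

/-!
Outside `B_R̄` confinement gives `c|x|² ≤ ∇g·x`; inside, Cauchy–Schwarz gives
`∇g·x ≥ -R̄ G` and trivially `c|x|² ≤ c R̄²`. Hence `c|x|² ≤ ∇g·x + R̄ G + c R̄²` everywhere,
and integrating against `ρ_ε` and using `∫∫ ∇g·x dρ_ε = -ε I ≤ ε d ≤ d` bounds `c m₂(ρ_ε)`.
-/

section Confinement

variable {E S : Type*} [NormedAddCommGroup E] [InnerProductSpace ℝ E]
  {g : E → S → E} {c Rbar G : ℝ}

theorem mul_norm_sq_le_inner_add_of_confining (hc : 0 ≤ c) (hRbar : 0 ≤ Rbar) (hG : 0 ≤ G)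
    (hconf : ∀ x s, Rbar < ‖x‖ → c * ‖x‖ ^ 2 ≤ ⟪g x s, x⟫)
    (hGbound : ∀ x s, ‖x‖ ≤ Rbar → ‖g x s‖ ≤ G) (x : E) (s : S) :
    c * ‖x‖ ^ 2 ≤ ⟪g x s, x⟫ + (Rbar * G + c * Rbar ^ 2) := by
  rcases lt_or_ge Rbar ‖x‖ with hout | hin
  · have := hconf x s hout
    nlinarith [mul_nonneg hRbar hG, mul_nonneg hc (sq_nonneg Rbar)]
  · have hinner : -(Rbar * G) ≤ ⟪g x s, x⟫ :=
      calc -(Rbar * G) ≤ -(‖g x s‖ * ‖x‖) := by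
            rw [neg_le_neg_iff, mul_comm Rbar]
            exact mul_le_mul (hGbound x s hin) hin (norm_nonneg _) hG
        _ ≤ ⟪g x s, x⟫ := neg_le_of_abs_le (abs_real_inner_le_norm _ _)
    have hsq : c * ‖x‖ ^ 2 ≤ c * Rbar ^ 2 :=
      mul_le_mul_of_nonneg_left (pow_le_pow_left₀ (norm_nonneg x) hin 2) hc
    linarith

variable [MeasurableSpace E] [MeasurableSpace S] {ρ : Measure (E × S)} [IsProbabilityMeasure ρ]

theorem mul_integral_norm_sq_le_of_confining (hc : 0 ≤ c) (hRbar : 0 ≤ Rbar) (hG : 0 ≤ G)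
    (hconf : ∀ x s, Rbar < ‖x‖ → c * ‖x‖ ^ 2 ≤ ⟪g x s, x⟫)
    (hGbound : ∀ x s, ‖x‖ ≤ Rbar → ‖g x s‖ ≤ G)
    (hint_inner : Integrable (fun p => ⟪g p.1 p.2, p.1⟫) ρ)
    (hint_sq : Integrable (fun p => ‖p.1‖ ^ 2) ρ) :
    c * ∫ p, ‖p.1‖ ^ 2 ∂ρ ≤ (∫ p, ⟪g p.1 p.2, p.1⟫ ∂ρ) + (Rbar * G + c * Rbar ^ 2) := by
  have hmono : ∫ p, c * ‖p.1‖ ^ 2 ∂ρ ≤ ∫ p, (⟪g p.1 p.2, p.1⟫ + (Rbar * G + c * Rbar ^ 2)) ∂ρ :=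
    integral_mono (hint_sq.const_mul c) (hint_inner.add (integrable_const _))
      fun p => mul_norm_sq_le_inner_add_of_confining hc hRbar hG hconf hGbound p.1 p.2
  rwa [integral_const_mul, integral_add hint_inner (integrable_const _), integral_const,
    probReal_univ, one_smul] at hmono

end Confinement

theorem stmt_7_general {d n : ℕ} (c Rbar G ε : ℝ)
    (hc : 0 < c) (hRbar : 0 < Rbar)
    (hε : 0 < ε) (hε1 : ε ≤ 1)
    (gradg : EuclideanSpace ℝ (Fin d) → EuclideanSpace ℝ (Fin n) → EuclideanSpace ℝ (Fin d))
    (hconf : ∀ (x : EuclideanSpace ℝ (Fin d)) (s : EuclideanSpace ℝ (Fin n)),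
      Rbar < ‖x‖ → c * ‖x‖ ^ 2 ≤ ⟪gradg x s, x⟫)
    (hGbound : ∀ (x : EuclideanSpace ℝ (Fin d)) (s : EuclideanSpace ℝ (Fin n)),
      ‖x‖ ≤ Rbar → ‖gradg x s‖ ≤ G)
    (ρ : Measure (EuclideanSpace ℝ (Fin d) × EuclideanSpace ℝ (Fin n)))
    [IsProbabilityMeasure ρ]
    (hint1 : Integrable (fun p => ⟪gradg p.1 p.2, p.1⟫) ρ)
    (hint2 : Integrable (fun p => ‖p.1‖ ^ 2) ρ)
    (I : ℝ) (hI : -(d : ℝ) ≤ I)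
    (heq : (∫ p, ⟪gradg p.1 p.2, p.1⟫ ∂ρ) + ε * I = 0) :
    ∫ p, ‖p.1‖ ^ 2 ∂ρ ≤ (Rbar * G + c * Rbar ^ 2 + d) / c := by
  have hG : 0 ≤ G := (norm_nonneg _).trans (hGbound 0 0 (by simpa using hRbar.le))
  have hmoment := mul_integral_norm_sq_le_of_confining hc.le hRbar.le hG hconf hGbound hint1 hint2
  have hdiffusion : -(ε * I) ≤ d :=
    calc -(ε * I) ≤ ε * d := by nlinarith
      _ ≤ d := mul_le_of_le_one_left (Nat.cast_nonneg d) hε1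
  rw [le_div_iff₀ hc]
  linarith

/-- Uniform second-moment bound for the diffusive stationary approximation: if
`∇g·x ≥ c|x|²` for `|x| > R̄`, `|∇g| ≤ G` on `B_R̄`, the probability measure
`ρ_ε` lives on `B_R × S` and satisfies `∫∫ (∇g·x) dρ_ε + ε I = 0` with the
integration-by-parts bound `I ≥ -d`, then `m₂(ρ_ε) ≤ (R̄ G + c R̄² + d)/c`,
independently of `R` and `ε`. -/
theorem stmt_7 {d n : ℕ} (c Rbar R G ε : ℝ)
    (hc : 0 < c) (hRbar : 0 < Rbar) (hR : Rbar < R) (hG : 0 ≤ G)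
    (hε : 0 < ε) (hε1 : ε ≤ 1)
    (gradg : EuclideanSpace ℝ (Fin d) → EuclideanSpace ℝ (Fin n) → EuclideanSpace ℝ (Fin d))
    (hconf : ∀ (x : EuclideanSpace ℝ (Fin d)) (s : EuclideanSpace ℝ (Fin n)),
      Rbar < ‖x‖ → c * ‖x‖ ^ 2 ≤ ⟪gradg x s, x⟫)
    (hGbound : ∀ (x : EuclideanSpace ℝ (Fin d)) (s : EuclideanSpace ℝ (Fin n)),
      ‖x‖ ≤ Rbar → ‖gradg x s‖ ≤ G)
    (ρ : Measure (EuclideanSpace ℝ (Fin d) × EuclideanSpace ℝ (Fin n)))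
    [IsProbabilityMeasure ρ]
    (hsupp : ρ ((Metric.closedBall (0 : EuclideanSpace ℝ (Fin d)) R ×ˢ Set.univ)ᶜ) = 0)
    (hint1 : Integrable (fun p => ⟪gradg p.1 p.2, p.1⟫) ρ)
    (hint2 : Integrable (fun p => ‖p.1‖ ^ 2) ρ)
    (I : ℝ) (hI : -(d : ℝ) ≤ I)
    (heq : (∫ p, ⟪gradg p.1 p.2, p.1⟫ ∂ρ) + ε * I = 0) :
    ∫ p, ‖p.1‖ ^ 2 ∂ρ ≤ (Rbar * G + c * Rbar ^ 2 + d) / c :=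
  stmt_7_general c Rbar G ε hc hRbar hε hε1 gradg hconf hGbound ρ hint1 hint2 I hI heq
end

section
/- Let ρ ∈ P(ℝ^d × S) be a stationary solution in the weak sense: ∫_{ℝ^d×S} ∇f(x,s)·∇φ(x) dρ(x,s) = 0 for every compactly supported smooth φ depending only on x. Suppose ψ, φ : ℝ^d → ℝ with φ ≥ 0 satisfy ∇f(x,s)·∇ψ(x) ≥ φ(x) for all (x,s). Then the support of the spatial marginal ρ̄ of ρ is contained in the closure of the set {φ = 0}. -/
open MeasureTheory RealInnerProductSpace

/-- Support lemma for stationary solutions: if `ρ` satisfies the weak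
stationarity identity `∫ ∇f·∇ψ dρ = 0` for x-only test functions, and
`ψ, φ` with `φ ≥ 0` continuous satisfy `∇f(x,s)·∇ψ(x) ≥ φ(x)` for all `(x,s)`,
then the support of the spatial marginal `ρ̄` is contained in `closure {φ = 0}`. -/
theorem stmt_8 {d n : ℕ}
    (gradf : EuclideanSpace ℝ (Fin d) → EuclideanSpace ℝ (Fin n) → EuclideanSpace ℝ (Fin d))
    (ρ : Measure (EuclideanSpace ℝ (Fin d) × EuclideanSpace ℝ (Fin n)))
    [IsProbabilityMeasure ρ]
    (ψ : EuclideanSpace ℝ (Fin d) → ℝ)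
    (Dψ : EuclideanSpace ℝ (Fin d) → EuclideanSpace ℝ (Fin d))
    (hψ : ∀ x, HasGradientAt ψ (Dψ x) x)
    (φ : EuclideanSpace ℝ (Fin d) → ℝ) (hφcont : Continuous φ)
    (hφpos : ∀ x, 0 ≤ φ x)
    (hpoint : ∀ (x : EuclideanSpace ℝ (Fin d)) (s : EuclideanSpace ℝ (Fin n)),
      φ x ≤ ⟪gradf x s, Dψ x⟫)
    (hintψ : Integrable (fun p => ⟪gradf p.1 p.2, Dψ p.1⟫) ρ)
    (hintφ : Integrable (fun p => φ p.1) ρ)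
    (hstat : ∫ p, ⟪gradf p.1 p.2, Dψ p.1⟫ ∂ρ = 0) :
    ∀ x : EuclideanSpace ℝ (Fin d),
      (∀ U : Set (EuclideanSpace ℝ (Fin d)), IsOpen U → x ∈ U →
        0 < (ρ.map Prod.fst) U) →
      x ∈ closure {y | φ y = 0} := by
  intro x hx
  -- ∫ φ∘fst = 0
  have hle : ∫ p, φ p.1 ∂ρ ≤ 0 := by
    rw [← hstat]
    have hmono : (fun p : EuclideanSpace ℝ (Fin d) × EuclideanSpace ℝ (Fin n) => φ p.1) ≤
        fun p : EuclideanSpace ℝ (Fin d) × EuclideanSpace ℝ (Fin n) => ⟪gradf p.1 p.2, Dψ p.1⟫ := fun p => hpoint p.1 p.2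
    exact integral_mono hintφ hintψ hmono
  have hge : 0 ≤ ∫ p, φ p.1 ∂ρ := integral_nonneg (fun p => hφpos p.1)
  have hzero : ∫ p, φ p.1 ∂ρ = 0 := le_antisymm hle hge
  have hae : (fun p : EuclideanSpace ℝ (Fin d) × EuclideanSpace ℝ (Fin n) => φ p.1)
      =ᵐ[ρ] 0 :=
    (integral_eq_zero_iff_of_nonneg (fun p : EuclideanSpace ℝ (Fin d) × EuclideanSpace ℝ (Fin n) => hφpos p.1) hintφ).mp hzero
  by_contra hxc
  set U : Set (EuclideanSpace ℝ (Fin d)) := (closure {y | φ y = 0})ᶜ with hU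
  have hUopen : IsOpen U := isClosed_closure.isOpen_compl
  have hxU : x ∈ U := hxc
  have hpos := hx U hUopen hxU
  rw [Measure.map_apply measurable_fst hUopen.measurableSet] at hpos
  have hsub : Prod.fst ⁻¹' U ⊆ {p : EuclideanSpace ℝ (Fin d) × EuclideanSpace ℝ (Fin n) |
      ¬ φ p.1 = 0} := by
    intro p hp hp0
    exact hp (subset_closure hp0)
  have hnull : ρ {p : EuclideanSpace ℝ (Fin d) × EuclideanSpace ℝ (Fin n) |
      ¬ φ p.1 = 0} = 0 := hae
  exact absurd (measure_mono_null hsub hnull) (ne_of_gt hpos)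
end

section
/- Assume ∇f(x,s)·x ≥ c|x|² for all |x| > R̄, s ∈ S, with c > 0. Define ψ(x) := |x|²/2 for |x| > R̄ and ψ(x) := R̄²/2 otherwise, and φ(x) := c|x|² for |x| > R̄, φ(x) := 0 otherwise. Then ∇f(x,s)·∇ψ(x) ≥ φ(x) for all x, s, and consequently any stationary spatial marginal ρ̄ (satisfying ∫ ∇f·∇ψ dρ = 0 in the weak sense) is supported in the closed ball of radius R̄ centered at the origin. -/
open MeasureTheory RealInnerProductSpace

/-- With the confinement condition `∇f(x,s)·x ≥ c|x|²` for `|x| > R̄`, the choice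
`ψ(x) = |x|²/2` outside `B_R̄` (constant inside, with gradient `Dψ x = x` outside,
`0` inside) and `φ(x) = c|x|²` outside, `0` inside, satisfies
`∇f·∇ψ ≥ φ ≥ 0` pointwise, and any stationary spatial marginal
(with `∫ ∇f·∇ψ dρ = 0`) is supported in the closed ball of radius `R̄`. -/
theorem stmt_9 {d n : ℕ} (c Rbar : ℝ) (hc : 0 < c) (hRbar : 0 < Rbar)
    (gradf : EuclideanSpace ℝ (Fin d) → EuclideanSpace ℝ (Fin n) → EuclideanSpace ℝ (Fin d))
    (hconf : ∀ (x : EuclideanSpace ℝ (Fin d)) (s : EuclideanSpace ℝ (Fin n)),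
      Rbar < ‖x‖ → c * ‖x‖ ^ 2 ≤ ⟪gradf x s, x⟫)
    (Dψ : EuclideanSpace ℝ (Fin d) → EuclideanSpace ℝ (Fin d))
    (hDψ : ∀ x, Dψ x = if Rbar < ‖x‖ then x else 0)
    (φ : EuclideanSpace ℝ (Fin d) → ℝ)
    (hφ : ∀ x, φ x = if Rbar < ‖x‖ then c * ‖x‖ ^ 2 else 0) :
    (∀ (x : EuclideanSpace ℝ (Fin d)) (s : EuclideanSpace ℝ (Fin n)),
      φ x ≤ ⟪gradf x s, Dψ x⟫ ∧ 0 ≤ φ x) ∧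
    (∀ ρ : Measure (EuclideanSpace ℝ (Fin d) × EuclideanSpace ℝ (Fin n)),
      IsProbabilityMeasure ρ →
      Integrable (fun p => ⟪gradf p.1 p.2, Dψ p.1⟫) ρ →
      (∫ p, ⟪gradf p.1 p.2, Dψ p.1⟫ ∂ρ) = 0 →
      ∀ x : EuclideanSpace ℝ (Fin d),
        (∀ U : Set (EuclideanSpace ℝ (Fin d)), IsOpen U → x ∈ U →
          0 < (ρ.map Prod.fst) U) →
        ‖x‖ ≤ Rbar) := by
  have key : ∀ (x : EuclideanSpace ℝ (Fin d)) (s : EuclideanSpace ℝ (Fin n)),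
      φ x ≤ ⟪gradf x s, Dψ x⟫ ∧ 0 ≤ φ x := by
    intro x s
    rw [hφ, hDψ]
    by_cases h : Rbar < ‖x‖
    · simp only [h, if_true]
      exact ⟨hconf x s h, by positivity⟩
    · simp [h]
  refine ⟨key, ?_⟩
  intro ρ hprob hint hzero x hx
  by_contra hlt
  push_neg at hlt
  -- the integrand is nonneg with integral zero, hence a.e. zero
  have hnn : 0 ≤ fun p : EuclideanSpace ℝ (Fin d) × EuclideanSpace ℝ (Fin n) =>
      ⟪gradf p.1 p.2, Dψ p.1⟫ := by
    intro p
    exact le_trans (key p.1 p.2).2 (key p.1 p.2).1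
  have hae : (fun p : EuclideanSpace ℝ (Fin d) × EuclideanSpace ℝ (Fin n) =>
      ⟪gradf p.1 p.2, Dψ p.1⟫) =ᵐ[ρ] 0 :=
    (integral_eq_zero_iff_of_nonneg hnn hint).mp hzero
  -- the set where ‖p.1‖ > Rbar is contained in the set where the integrand is nonzero
  have hnull : ρ {p : EuclideanSpace ℝ (Fin d) × EuclideanSpace ℝ (Fin n) |
      Rbar < ‖p.1‖} = 0 := by
    have h0 : ρ {p : EuclideanSpace ℝ (Fin d) × EuclideanSpace ℝ (Fin n) |
        ¬ (⟪gradf p.1 p.2, Dψ p.1⟫ = (0 : ℝ))} = 0 := hae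
    refine measure_mono_null ?_ h0
    intro p hp
    simp only [Set.mem_setOf_eq] at hp ⊢
    have h1 : c * ‖p.1‖ ^ 2 ≤ ⟪gradf p.1 p.2, Dψ p.1⟫ := by
      have := (key p.1 p.2).1
      rwa [hφ, if_pos hp] at this
    have h2 : 0 < c * ‖p.1‖ ^ 2 := by
      have : 0 < ‖p.1‖ := lt_trans hRbar hp
      positivity
    exact ne_of_gt (lt_of_lt_of_le h2 h1)
  -- contradiction with positivity at x
  set U : Set (EuclideanSpace ℝ (Fin d)) := {y | Rbar < ‖y‖} with hU
  have hUopen : IsOpen U := isOpen_lt continuous_const continuous_norm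
  have hxU : x ∈ U := hlt
  have hpos := hx U hUopen hxU
  rw [Measure.map_apply measurable_fst hUopen.measurableSet] at hpos
  have : ρ (Prod.fst ⁻¹' U) = 0 := hnull
  rw [this] at hpos
  exact lt_irrefl 0 hpos
end

section
/- Let K : [0,∞) → (0,∞) be continuously differentiable with ∫₀^∞ 1/K(u) du = ∞ and ∫₀^∞ 1/K(u)² du < ∞, and let ε : [0,∞) → [0,∞) be differentiable, satisfying for some α, σ², C > 0 and all t ≥ T: ε'(t) ≤ −(2α/K(t)) ε(t) + σ²(C+1)/K(t)². Then ε(t) → 0 as t → ∞. -/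
/-!
Since `ε' ≤ -a ε + b` with `a, ε ≥ 0`, also `ε' ≤ b`, so after time `s` the function `ε` can grow
by at most the tail `∫_s^∞ |b|`, which tends to `0`. On the other hand `ε` cannot stay above any
`δ > 0`: then `ε' ≤ -δ a + b`, and integrating would bound `δ ∫_s^t a` uniformly in `t`,
contradicting `∫^∞ a = ∞`. So `ε` gets arbitrarily small at arbitrarily late times and afterwards
rises by arbitrarily little.
-/

open MeasureTheory Filter Set Topology

theorem Continuous.integrableOn_Ici_of_integrableAtFilter_atTop {f : ℝ → ℝ} (hf : Continuous f)
    (h : IntegrableAtFilter f atTop) (s : ℝ) : IntegrableOn f (Ici s) :=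
  integrableOn_Ici_iff_integrableAtFilter_atTop.2 ⟨h, hf.locallyIntegrable.locallyIntegrableOn _⟩

theorem intervalIntegral_le_integral_Ioi_norm {b : ℝ → ℝ} {s t : ℝ} (hst : s ≤ t)
    (hb : IntegrableOn b (Ioi s)) : ∫ u in s..t, b u ≤ ∫ u in Ioi s, ‖b u‖ :=
  calc ∫ u in s..t, b u ≤ ∫ u in s..t, ‖b u‖ :=
        (le_abs_self _).trans (intervalIntegral.abs_integral_le_integral_abs hst)
    _ = ∫ u in Ioc s t, ‖b u‖ := intervalIntegral.integral_of_le hst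
    _ ≤ ∫ u in Ioi s, ‖b u‖ :=
        setIntegral_mono_set hb.norm (Eventually.of_forall fun _ => norm_nonneg _)
          Ioc_subset_Ioi_self.eventuallyLE

theorem tendsto_nhds_zero_of_frequently_lt_of_le_add {ε τ : ℝ → ℝ} {T : ℝ} (hε : ∀ t, 0 ≤ ε t)
    (hτ : Tendsto τ atTop (𝓝 0)) (hfreq : ∀ δ > 0, ∃ᶠ t in atTop, ε t < δ)
    (hle : ∀ s t, T ≤ s → s ≤ t → ε t ≤ ε s + τ s) : Tendsto ε atTop (𝓝 0) := by
  refine tendsto_order.2 ⟨fun _ h => Eventually.of_forall fun t => h.trans_le (hε t), ?_⟩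
  intro δ hδ
  have hτ_small : ∀ᶠ s in atTop, T ≤ s ∧ τ s < δ / 2 :=
    (eventually_ge_atTop T).and (hτ.eventually (gt_mem_nhds (half_pos hδ)))
  obtain ⟨s, hεs, hTs, hτs⟩ := ((hfreq _ (half_pos hδ)).and_eventually hτ_small).exists
  filter_upwards [eventually_ge_atTop s] with t hst
  linarith [hle s t hTs hst]

section DecayInequality

variable {ε a b : ℝ → ℝ} {T : ℝ}

theorem sub_le_integral_of_deriv_le {φ : ℝ → ℝ} {s t : ℝ} (hε : Differentiable ℝ ε) (hst : s ≤ t)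
    (hφ : IntegrableOn φ (Icc s t)) (h : ∀ u ∈ Ioo s t, deriv ε u ≤ φ u) :
    ε t - ε s ≤ ∫ u in s..t, φ u :=
  intervalIntegral.sub_le_integral_of_hasDeriv_right_of_le hst hε.continuous.continuousOn
    (fun u _ => (hε u).hasDerivAt.hasDerivWithinAt) hφ h

theorem frequently_lt_of_deriv_le_neg_mul_add (hε : Differentiable ℝ ε) (hε0 : ∀ t, 0 ≤ ε t)
    (ha : Continuous a) (ha0 : ∀ t, 0 ≤ a t) (ha_div : ¬ IntegrableAtFilter a atTop)
    (hb : Continuous b) (hb_int : IntegrableAtFilter b atTop)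
    (h : ∀ t, T ≤ t → deriv ε t ≤ -a t * ε t + b t) {δ : ℝ} (hδ : 0 < δ) :
    ∃ᶠ t in atTop, ε t < δ := by
  rw [frequently_atTop]
  intro S₀
  by_contra! hεδ
  set S := max S₀ T
  have hb_S : IntegrableOn b (Ici S) := hb.integrableOn_Ici_of_integrableAtFilter_atTop hb_int S
  have hbound : ∀ t, S ≤ t → ∫ u in S..t, ‖a u‖ ≤ (ε S + ∫ u in Ioi S, ‖b u‖) / δ := by
    intro t hSt
    have hderiv : ∀ u ∈ Ioo S t, deriv ε u ≤ b u - δ * a u := fun u hu => by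
      have hSu : S ≤ u := hu.1.le
      nlinarith [h u ((le_max_right _ _).trans hSu), hεδ u ((le_max_left _ _).trans hSu), ha0 u]
    have hFTC := sub_le_integral_of_deriv_le (φ := fun u => b u - δ * a u) hε hSt
      (hb.sub (continuous_const.mul ha)).integrableOn_Icc hderiv
    rw [intervalIntegral.integral_sub (hb.intervalIntegrable _ _)
      ((ha.intervalIntegrable _ _).const_mul δ), intervalIntegral.integral_const_mul]
      at hFTC
    have hb_tail := intervalIntegral_le_integral_Ioi_norm hSt (hb_S.mono_set Ioi_subset_Ici_self)
    have ha_norm : ∫ u in S..t, ‖a u‖ = ∫ u in S..t, a u :=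
      intervalIntegral.integral_congr fun u _ => Real.norm_of_nonneg (ha0 u)
    rw [ha_norm, le_div_iff₀ hδ]
    linarith [hε0 t]
  exact ha_div ⟨Ioi S, Ioi_mem_atTop S, integrableOn_Ioi_of_intervalIntegral_norm_bounded _ S
    (fun t => ha.integrableOn_Ioc) tendsto_id (eventually_ge_atTop S |>.mono hbound)⟩

theorem le_add_integral_Ioi_norm_of_deriv_le_neg_mul_add (hε : Differentiable ℝ ε)
    (hε0 : ∀ t, 0 ≤ ε t) (ha0 : ∀ t, 0 ≤ a t) (hb : Continuous b)
    (hb_int : IntegrableAtFilter b atTop) (h : ∀ t, T ≤ t → deriv ε t ≤ -a t * ε t + b t)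
    {s t : ℝ} (hTs : T ≤ s) (hst : s ≤ t) : ε t ≤ ε s + ∫ u in Ioi s, ‖b u‖ := by
  have hb_s : IntegrableOn b (Ici s) := hb.integrableOn_Ici_of_integrableAtFilter_atTop hb_int s
  have hFTC : ε t - ε s ≤ ∫ u in s..t, b u :=
    sub_le_integral_of_deriv_le hε hst hb.integrableOn_Icc fun u hu => by
      nlinarith [h u (hTs.trans hu.1.le), hε0 u, ha0 u]
  linarith [intervalIntegral_le_integral_Ioi_norm hst (hb_s.mono_set Ioi_subset_Ici_self)]

theorem tendsto_nhds_zero_of_deriv_le_neg_mul_add (hε : Differentiable ℝ ε) (hε0 : ∀ t, 0 ≤ ε t)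
    (ha : Continuous a) (ha0 : ∀ t, 0 ≤ a t) (ha_div : ¬ IntegrableAtFilter a atTop)
    (hb : Continuous b) (hb_int : IntegrableAtFilter b atTop)
    (h : ∀ t, T ≤ t → deriv ε t ≤ -a t * ε t + b t) : Tendsto ε atTop (𝓝 0) :=
  tendsto_nhds_zero_of_frequently_lt_of_le_add hε0 (tendsto_integral_Ioi_zero tendsto_id)
    (fun _ hδ => frequently_lt_of_deriv_le_neg_mul_add hε hε0 ha ha0 ha_div hb hb_int h hδ)
    (fun _ _ hTs hst =>
      le_add_integral_Ioi_norm_of_deriv_le_neg_mul_add hε hε0 ha0 hb hb_int h hTs hst)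

end DecayInequality

theorem stmt_18_general (K : ℝ → ℝ) (hK1 : ContDiff ℝ 1 K) (hKpos : ∀ t, 0 < K t)
    (hKdiv : ¬ IntegrableOn (fun u => 1 / K u) (Set.Ici (0 : ℝ)))
    (hKsq : IntegrableOn (fun u => 1 / (K u) ^ 2) (Set.Ici (0 : ℝ)))
    (ε : ℝ → ℝ) (hε : Differentiable ℝ ε) (hεpos : ∀ t, 0 ≤ ε t)
    (α σ2 C T : ℝ) (hα : 0 < α)
    (h : ∀ t, T ≤ t → deriv ε t ≤ -(2 * α / K t) * ε t + σ2 * (C + 1) / (K t) ^ 2) :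
    Tendsto ε atTop (nhds 0) := by
  have hK : Continuous K := hK1.continuous
  have hK_ne : ∀ t, K t ≠ 0 := fun t => (hKpos t).ne'
  have ha : Continuous fun t => 2 * α / K t := continuous_const.div hK hK_ne
  refine tendsto_nhds_zero_of_deriv_le_neg_mul_add hε hεpos ha
    (fun t => div_nonneg (by positivity) (hKpos t).le) ?_
    (continuous_const.div (hK.pow 2) fun t => pow_ne_zero 2 (hK_ne t)) ?_ h
  · intro ha_int
    refine hKdiv <| IntegrableOn.congr_fun ((ha.integrableOn_Ici_of_integrableAtFilter_atTop
      ha_int 0).const_mul (2 * α)⁻¹) (fun u _ => ?_) measurableSet_Ici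
    field_simp
  · exact ⟨Ici 0, Ici_mem_atTop 0, IntegrableOn.congr_fun (hKsq.const_mul (σ2 * (C + 1)))
      (fun u _ => mul_one_div _ _) measurableSet_Ici⟩

/-- Abstract decay lemma for the variable learning rate: if `K` is `C¹`, positive,
with `∫₀^∞ 1/K = ∞` and `∫₀^∞ 1/K² < ∞`, and the nonnegative differentiable `ε`
satisfies `ε' ≤ -(2α/K)ε + σ²(C+1)/K²` for `t ≥ T`, then `ε(t) → 0` as `t → ∞`. -/
theorem stmt_18 (K : ℝ → ℝ) (hK1 : ContDiff ℝ 1 K) (hKpos : ∀ t, 0 < K t)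
    (hKdiv : ¬ IntegrableOn (fun u => 1 / K u) (Set.Ici (0 : ℝ)))
    (hKsq : IntegrableOn (fun u => 1 / (K u) ^ 2) (Set.Ici (0 : ℝ)))
    (ε : ℝ → ℝ) (hε : Differentiable ℝ ε) (hεpos : ∀ t, 0 ≤ ε t)
    (α σ2 C T : ℝ) (hα : 0 < α) (hσ : 0 < σ2) (hC : 0 < C)
    (h : ∀ t, T ≤ t → deriv ε t ≤ -(2 * α / K t) * ε t + σ2 * (C + 1) / (K t) ^ 2) :
    Tendsto ε atTop (nhds 0) :=
  stmt_18_general K hK1 hKpos hKdiv hKsq ε hε hεpos α σ2 C T hα h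
end
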